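/- arXiv:1103.4770 — 4 statements merged into one kernel-verified Lean document; each statement's English description precedes it below -/
import Mathlib

section
/- Let $G$ be an abelian group, $A \subseteq G$ a subset, and $k, \ell \geq 1$ natural numbers. Suppose $X_1, \dots, X_{k\ell+1}$ are subsets of $A$ such that each $X_i$ covers $A$ by $\ell$ translates and every $k$ of them (for distinct indices) have empty intersection. Then, in the abelian group $G' = G \times \mathbb{Z}/k\mathbb{Z}$, there exist pairwise disjoint subsets $Y_1, \dots, Y_{k\ell+1}$ of $A' = A \times \mathbb{Z}/k\mathbb{Z}$ such that each $Y_i$ covers $A'$ by $k\ell$ translates. (Concretely, one may take $(x, n) \in Y_i$ iff $x \in X_i$ and $n$ is the maximum number such that $x \in X_{i_1} \cap \dots \cap X_{i_n} \cap X_i$ for some distinct indices $i_1, \dots, i_n < i$.) -/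
/-!
Give each `x ∈ X i` the level `n = #{j < i | x ∈ X j}` and put `(x, n mod k)` into `Y i`.
Since no `k` of the sets meet, levels are `< k`; along the indices `i` with `x ∈ X i` they
strictly increase, so the `Y i` are pairwise disjoint. Each `Y i` is the graph of a function on
`X i`, and translating such a graph by all of `{0} × ℤ/kℤ` sweeps out `X i × ℤ/kℤ`; together with
the `ℓ` translates covering `A` this gives `kℓ` translates covering `A × ℤ/kℤ`.
-/

open Finset

section GraphOn

variable {G H : Type*}

def graphOn (X : Set G) (f : G → H) : Set (G × H) := {p | p.1 ∈ X ∧ p.2 = f p.1}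

theorem graphOn_subset_prod {X A : Set G} (hXA : X ⊆ A) (f : G → H) :
    graphOn X f ⊆ A ×ˢ (Set.univ : Set H) :=
  fun _ hp => ⟨hXA hp.1, trivial⟩

theorem disjoint_graphOn {X X' : Set G} {f f' : G → H} (h : ∀ x ∈ X, x ∈ X' → f x ≠ f' x) :
    Disjoint (graphOn X f) (graphOn X' f') := by
  rw [Set.disjoint_left]
  rintro ⟨x, y⟩ ⟨hx, hy⟩ ⟨hx', hy'⟩
  exact h x hx hx' (hy.symm.trans hy')

theorem prod_univ_subset_iUnion_graphOn [AddCommGroup G] [AddCommGroup H] {ι : Type*}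
    {A X : Set G} {g : ι → G} (hA : A ⊆ ⋃ j, (fun x => g j + x) '' X) (f : G → H) :
    A ×ˢ (Set.univ : Set H) ⊆
      ⋃ jh : ι × H, (fun p => (g jh.1, jh.2) + p) '' graphOn X f := by
  rintro ⟨a, t⟩ ⟨ha, -⟩
  obtain ⟨j, x, hx, rfl⟩ := Set.mem_iUnion.mp (hA ha)
  refine Set.mem_iUnion.mpr ⟨(j, t - f x), (x, f x), ⟨hx, rfl⟩, ?_⟩
  simp

end GraphOn

section PriorCount

variable {ι α : Type*} [Fintype ι] [LinearOrder ι]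

open Classical in
noncomputable def priorCount (X : ι → Set α) (x : α) (i : ι) : ℕ :=
  #{j | j < i ∧ x ∈ X j}

theorem priorCount_lt {X : ι → Set α} {k : ℕ}
    (hint : ∀ s : Finset ι, s.card = k → ⋂ i ∈ s, X i = ∅) (x : α) (i : ι) :
    priorCount X x i < k := by
  classical
  by_contra! hk
  obtain ⟨t, hts, htk⟩ := exists_subset_card_eq hk
  have hx : x ∈ ⋂ j ∈ t, X j := Set.mem_iInter₂.mpr fun j hj => (mem_filter.mp (hts hj)).2.2
  simp [hint t htk] at hx

theorem priorCount_lt_priorCount {X : ι → Set α} {x : α} {i j : ι} (hij : i < j)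
    (hx : x ∈ X i) : priorCount X x i < priorCount X x j := by
  classical
  refine card_lt_card (ssubset_iff.mpr ⟨i, by simp, fun m hm => ?_⟩)
  simp only [mem_insert, mem_filter, mem_univ, true_and] at hm ⊢
  rcases hm with rfl | ⟨hmi, hmx⟩
  exacts [⟨hij, hx⟩, ⟨hmi.trans hij, hmx⟩]

theorem natCast_priorCount_ne {X : ι → Set α} {k : ℕ}
    (hint : ∀ s : Finset ι, s.card = k → ⋂ i ∈ s, X i = ∅) {x : α} {i j : ι} (hij : i < j)
    (hx : x ∈ X i) : (priorCount X x i : ZMod k) ≠ priorCount X x j := by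
  rw [Ne, ZMod.natCast_eq_natCast_iff', Nat.mod_eq_of_lt (priorCount_lt hint x i),
    Nat.mod_eq_of_lt (priorCount_lt hint x j)]
  exact (priorCount_lt_priorCount hij hx).ne

end PriorCount

theorem stmt2_general {G : Type*} [AddCommGroup G] (A : Set G) (k ℓ : ℕ)
    (hk : 1 ≤ k)
    (X : Fin (k * ℓ + 1) → Set G)
    (hXA : ∀ i, X i ⊆ A)
    (hcov : ∀ i, ∃ g : Fin ℓ → G, A ⊆ ⋃ j, (fun x => g j + x) '' X i)
    (hint : ∀ s : Finset (Fin (k * ℓ + 1)), s.card = k → ⋂ i ∈ s, X i = ∅) :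
    ∃ Y : Fin (k * ℓ + 1) → Set (G × ZMod k),
      (∀ i, Y i ⊆ A ×ˢ (Set.univ : Set (ZMod k))) ∧
      (Pairwise fun i j => Disjoint (Y i) (Y j)) ∧
      (∀ i, ∃ g : Fin (k * ℓ) → G × ZMod k,
        A ×ˢ (Set.univ : Set (ZMod k)) ⊆ ⋃ j, (fun x => g j + x) '' Y i) := by
  have : NeZero k := ⟨by omega⟩
  refine ⟨fun i => graphOn (X i) fun x => (priorCount X x i : ZMod k),
    fun i => graphOn_subset_prod (hXA i) _, ?_, fun i => ?_⟩
  · refine (pairwise_disjoint_on _).mpr fun i j hij => disjoint_graphOn fun x hxi _ => ?_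
    exact natCast_priorCount_ne hint hij hxi
  · obtain ⟨g, hg⟩ := hcov i
    let e : Fin (k * ℓ) ≃ Fin ℓ × ZMod k :=
      finProdFinEquiv.symm.trans <| (Equiv.prodComm _ _).trans <|
        Equiv.prodCongr (Equiv.refl _) (ZMod.finEquiv k).toEquiv
    refine ⟨fun m => (g (e m).1, (e m).2), ?_⟩
    rw [e.surjective.iUnion_comp (fun jh => (fun p => (g jh.1, jh.2) + p) '' _)]
    exact prod_univ_subset_iUnion_graphOn hg _

/-- From `k*ℓ+1` subsets of `A` each covering `A` by `ℓ` translates, with every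
`k` of them having empty intersection, one obtains in `G × ℤ/kℤ` pairwise disjoint subsets
`Y 1, …, Y (k*ℓ+1)` of `A × ℤ/kℤ`, each covering `A × ℤ/kℤ` by `k*ℓ` translates. -/
theorem stmt2 {G : Type*} [AddCommGroup G] (A : Set G) (k ℓ : ℕ)
    (hk : 1 ≤ k) (hℓ : 1 ≤ ℓ)
    (X : Fin (k * ℓ + 1) → Set G)
    (hXA : ∀ i, X i ⊆ A)
    (hcov : ∀ i, ∃ g : Fin ℓ → G, A ⊆ ⋃ j, (fun x => g j + x) '' X i)
    (hint : ∀ s : Finset (Fin (k * ℓ + 1)), s.card = k → ⋂ i ∈ s, X i = ∅) :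
    ∃ Y : Fin (k * ℓ + 1) → Set (G × ZMod k),
      (∀ i, Y i ⊆ A ×ˢ (Set.univ : Set (ZMod k))) ∧
      (Pairwise fun i j => Disjoint (Y i) (Y j)) ∧
      (∀ i, ∃ g : Fin (k * ℓ) → G × ZMod k,
        A ×ˢ (Set.univ : Set (ZMod k)) ⊆ ⋃ j, (fun x => g j + x) '' Y i) :=
  stmt2_general A k ℓ hk X hXA hcov hint
end

section
/- Let $K$ be a compact Hausdorff abelian topological group, $k \geq 0$, and let $\Gamma$ be a torsion-free subgroup of the topological group $\mathbb{R}^k \times K$ that is discrete in the subspace topology. Then the projection homomorphism $p : \mathbb{R}^k \times K \to \mathbb{R}^k$ restricted to $\Gamma$ is injective, and the image $p(\Gamma)$ is a discrete subgroup of $\mathbb{R}^k$. -/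
/-!
The fibres of `Prod.fst : X × K → X` are compact when `K` is, so a closed discrete set meets each
fibre in a finite set. For a torsion-free discrete subgroup `Γ` this makes `Γ ∩ ker fst` a finite
torsion-free group, hence trivial. Compactness of `K` also makes `Prod.fst` a closed map, so on `Γ`
it is a closed embedding and carries the discreteness of `Γ` over to its image.
-/

open Topology

section Projection

variable {X K : Type*} [TopologicalSpace X] [TopologicalSpace K] [CompactSpace K]

lemma IsDiscrete.finite_inter_fst_preimage_singleton [T1Space X] {s : Set (X × K)}
    (hd : IsDiscrete s) (hs : IsClosed s) (x : X) : (s ∩ Prod.fst ⁻¹' {x}).Finite :=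
  ((isProperMap_fst_of_compactSpace.isCompact_preimage isCompact_singleton).inter_left hs).finite
    (hd.mono Set.inter_subset_left)

lemma IsClosed.isClosedEmbedding_domRestrict_fst {s : Set (X × K)} (hs : IsClosed s)
    (hinj : s.InjOn Prod.fst) : IsClosedEmbedding (s.domRestrict Prod.fst) :=
  .of_continuous_injective_isClosedMap (continuous_fst.comp continuous_subtype_val)
    hinj.injective (isClosedMap_fst_of_compactSpace.comp hs.isClosedEmbedding_subtypeVal.isClosedMap)

lemma IsDiscrete.image_fst {s : Set (X × K)} (hd : IsDiscrete s) (hs : IsClosed s)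
    (hinj : s.InjOn Prod.fst) : IsDiscrete (Prod.fst '' s) := by
  have : DiscreteTopology s := isDiscrete_iff_discreteTopology.mp hd
  rw [← Set.range_domRestrict, ← Set.image_univ]
  exact IsDiscrete.univ.image (hs.isClosedEmbedding_domRestrict_fst hinj).isInducing

end Projection

lemma AddMonoidHom.injOn_of_finite_inter_ker {A B : Type*} [AddGroup A] [AddGroup B] (f : A →+ B)
    {Γ : AddSubgroup A} (htf : ∀ x ∈ Γ, ∀ n : ℕ, 0 < n → n • x = 0 → x = 0)
    (hfin : ((Γ : Set A) ∩ f ⁻¹' {0}).Finite) : Set.InjOn f Γ := by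
  intro a ha b hb hab
  have hmem : ∀ n : ℕ, n • (a - b) ∈ (Γ : Set A) ∩ f ⁻¹' {0} := fun n ↦
    ⟨Γ.nsmul_mem (Γ.sub_mem ha hb) n, by simp [hab]⟩
  have hfo : IsOfFinAddOrder (a - b) := by
    by_contra h
    exact Set.infinite_of_injective_forall_mem (injective_nsmul_iff_not_isOfFinAddOrder.mpr h)
      hmem hfin
  obtain ⟨n, hn, hnx⟩ := hfo.exists_nsmul_eq_zero
  exact sub_eq_zero.mp (htf _ (Γ.sub_mem ha hb) n hn hnx)

/-- For a compact Hausdorff abelian topological group `K` and a torsion-free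
discrete subgroup `Γ` of `ℝ^k × K`, the projection to `ℝ^k` is injective on `Γ` and its
image is a discrete subgroup of `ℝ^k`. -/
theorem stmt6 {K : Type*} [AddCommGroup K] [TopologicalSpace K]
    [IsTopologicalAddGroup K] [CompactSpace K] [T2Space K]
    (k : ℕ) (Γ : AddSubgroup ((Fin k → ℝ) × K))
    (htf : ∀ x ∈ Γ, ∀ n : ℕ, 0 < n → n • x = 0 → x = 0)
    (hdisc : DiscreteTopology Γ) :
    Set.InjOn Prod.fst (Γ : Set ((Fin k → ℝ) × K)) ∧
      DiscreteTopology (Γ.map (AddMonoidHom.fst (Fin k → ℝ) K)) := by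
  have hclosed : IsClosed (Γ : Set ((Fin k → ℝ) × K)) := AddSubgroup.isClosed_of_discrete
  have hd : IsDiscrete (Γ : Set ((Fin k → ℝ) × K)) :=
    SetLike.isDiscrete_iff_discreteTopology.mpr hdisc
  have hinj : Set.InjOn Prod.fst (Γ : Set ((Fin k → ℝ) × K)) :=
    (AddMonoidHom.fst _ K).injOn_of_finite_inter_ker htf
      (hd.finite_inter_fst_preimage_singleton hclosed 0)
  exact ⟨hinj, SetLike.isDiscrete_iff_discreteTopology.mp (hd.image_fst hclosed hinj)⟩
end

section
/- Let $K$ be a compact Hausdorff abelian topological group, $k, r \geq 0$, and let $\mathbb{T} = \mathbb{R}/\mathbb{Z}$ denote the circle group. Suppose there exists a continuous, open, surjective group homomorphism $\varphi : \mathbb{R}^k \times K \to \mathbb{T}^{k+r}$ whose kernel is exactly $\mathbb{Z}^k \times \{0\}$ (the standard integer lattice in the $\mathbb{R}^k$ factor). Then $K$ is isomorphic as a topological group to $\mathbb{T}^r$. -/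
/-
Restricted to `ℝ^k`, `φ` is a continuous homomorphism into a torus that kills `ℤ^k`; lifting
it through the covering `ℝ → 𝕋` shows that it is `x ↦ N x mod ℤ` for an integer matrix `N`.
The kernel condition says that `N` induces an injection `𝕋^k → 𝕋^(k+r)`, which forces `N` to be
injective with torsion-free cokernel. So `N` is the first block of a change of basis of
`ℤ^(k+r)`: there are integer matrices with `C₂ N = 0`, `C₂ D = 1` and `N C₁ + D C₂ = 1`. Then
`m ↦ C₂ φ(0, m)` is a continuous bijective homomorphism from the compact group `K` onto `𝕋^r`,
hence a homeomorphism.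
-/

namespace Matrix

variable {l m n G H : Type*} [Fintype n] [AddCommGroup G] [AddCommGroup H]

def intMulVec (A : Matrix m n ℤ) : (n → G) →+ (m → G) where
  toFun t i := ∑ j, A i j • t j
  map_zero' := by ext; simp
  map_add' t u := by ext; simp [smul_add, Finset.sum_add_distrib]

@[simp]
theorem intMulVec_apply (A : Matrix m n ℤ) (t : n → G) (i : m) :
    A.intMulVec t i = ∑ j, A i j • t j := rfl

theorem intMulVec_mul [Fintype m] (A : Matrix l m ℤ) (B : Matrix m n ℤ) (t : n → G) :
    (A * B).intMulVec t = A.intMulVec (B.intMulVec t) := by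
  ext i
  simp only [intMulVec_apply, mul_apply, Finset.sum_smul, Finset.smul_sum, mul_smul]
  exact Finset.sum_comm

@[simp]
theorem intMulVec_one [DecidableEq n] (t : n → G) : (1 : Matrix n n ℤ).intMulVec t = t := by
  ext i
  simp [one_apply, ite_smul]

@[simp]
theorem intMulVec_zero (t : n → G) : (0 : Matrix m n ℤ).intMulVec t = 0 := by
  ext; simp

theorem add_intMulVec (A B : Matrix m n ℤ) (t : n → G) :
    (A + B).intMulVec t = A.intMulVec t + B.intMulVec t := by
  ext; simp [add_smul, Finset.sum_add_distrib]

theorem map_intMulVec (f : G →+ H) (A : Matrix m n ℤ) (t : n → G) :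
    A.intMulVec (fun j ↦ f (t j)) = fun i ↦ f (A.intMulVec t i) := by
  ext; simp [map_sum, map_zsmul]

theorem intMulVec_int (A : Matrix m n ℤ) (z : n → ℤ) : A.intMulVec z = A *ᵥ z := by
  ext; simp [mulVec, dotProduct]

theorem continuous_intMulVec [TopologicalSpace G] [IsTopologicalAddGroup G] (A : Matrix m n ℤ) :
    Continuous (A.intMulVec : (n → G) → (m → G)) := by
  refine continuous_pi fun i ↦ ?_
  simp only [intMulVec_apply]
  fun_prop

end Matrix

open LinearMap in
theorem Matrix.exists_complement {ι κ : Type*} [Fintype ι] [DecidableEq ι] [Fintype κ]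
    [DecidableEq κ] {r : ℕ} (hcard : Fintype.card ι = Fintype.card κ + r) (N : Matrix ι κ ℤ)
    (hN : Function.Injective N.mulVec)
    [Module.IsTorsionFree ℤ ((ι → ℤ) ⧸ range N.mulVecLin)] :
    ∃ (C₁ : Matrix κ ι ℤ) (C₂ : Matrix (Fin r) ι ℤ) (D : Matrix ι (Fin r) ℤ),
      C₂ * N = 0 ∧ C₂ * D = 1 ∧ N * C₁ + D * C₂ = 1 := by
  set f := N.mulVecLin
  -- the cokernel is free, hence projective, so `0 → ℤ^κ → ℤ^ι → coker f → 0` splits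
  obtain ⟨l, hl⟩ := (range f).mkQ.exists_rightInverse_of_surjective (range f).range_mkQ
  let e := ((exact_map_mkQ_range f).splitSurjectiveEquiv hN ⟨l, hl⟩).1
  have hfe : f = e.symm.toLinearMap ∘ₗ inl ℤ _ _ :=
    ((exact_map_mkQ_range f).splitSurjectiveEquiv hN ⟨l, hl⟩).2.1
  have hrank : Module.finrank ℤ ((ι → ℤ) ⧸ range f) = r := by
    have := e.finrank_eq
    simp only [Module.finrank_prod, Module.finrank_fintype_fun_eq_card, hcard] at this
    omega
  set g := e.trans ((LinearEquiv.refl ℤ (κ → ℤ)).prodCongr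
    (Module.finBasisOfFinrankEq ℤ _ hrank).equivFun)
  have hNg : N = toMatrix' (g.symm.toLinearMap ∘ₗ inl ℤ _ _) := by
    rw [← toMatrix'_toLin' N, Matrix.toLin'_apply']
    change toMatrix' f = _
    rw [hfe]
    congr 1; ext; simp [g]
  refine ⟨toMatrix' (fst ℤ _ _ ∘ₗ g.toLinearMap), toMatrix' (snd ℤ _ _ ∘ₗ g.toLinearMap),
    toMatrix' (g.symm.toLinearMap ∘ₗ inr ℤ _ _), ?_, ?_, ?_⟩ <;>
  simp only [hNg, ← toMatrix'_comp, ← map_add, ← toMatrix'_id] <;> congr 1 <;> ext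
  · simp
  · simp
  · simp [-Pi.add_apply, ← map_add]

theorem AddCircle.exists_continuous_lift {𝕜 E : Type*} [AddCommGroup 𝕜] [TopologicalSpace 𝕜]
    [IsTopologicalAddGroup 𝕜] (p : 𝕜) [DiscreteTopology (AddSubgroup.zmultiples p)]
    [AddCommGroup E] [TopologicalSpace E] [ContinuousAdd E] [SimplyConnectedSpace E]
    [LocallyPathConnectedSpace E] (χ : E →+ AddCircle p) (hχ : Continuous χ) :
    ∃ F : E →+ 𝕜, Continuous F ∧ ∀ x, (F x : AddCircle p) = χ x := by
  obtain ⟨F, ⟨-, hFχ⟩, huniq⟩ := (isCoveringMap_coe p).existsUnique_continuousMap_lifts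
    ⟨χ, hχ⟩ 0 0 (by simp)
  have hF (x : E) : (F x : AddCircle p) = χ x := congrFun hFχ x
  -- `t ↦ F (s + t) - F s` is another lift of `χ` vanishing at `0`
  have hadd (s t : E) : F (s + t) = F s + F t := by
    have := huniq ⟨fun t ↦ F (s + t) - F s, by fun_prop⟩
      ⟨by simp, funext fun t ↦ by simp [hF]⟩
    exact eq_add_of_sub_eq' (DFunLike.congr_fun this t)
  exact ⟨AddMonoidHom.mk' F hadd, F.continuous, hF⟩

local notation "𝕋" => AddCircle (1 : ℝ)

open Matrix

theorem exists_intMatrix_of_continuous {ι κ : Type*} [Fintype κ] (ψ : (κ → ℝ) →+ (ι → 𝕋))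
    (hψ : Continuous ψ) (hZ : ∀ z : κ → ℤ, ψ (fun j ↦ z j) = 0) :
    ∃ N : Matrix ι κ ℤ, ∀ x, ψ x = N.intMulVec (fun j ↦ (x j : 𝕋)) := by
  classical
  choose F hFc hF using fun i ↦ AddCircle.exists_continuous_lift (1 : ℝ)
    ((Pi.evalAddMonoidHom _ i).comp ψ) ((continuous_apply i).comp hψ)
  have hint (i : ι) (j : κ) : ∃ n : ℤ, F i (Pi.single j 1) = n := by
    have hj : ψ (Pi.single j 1) = 0 := by
      convert hZ (Pi.single j 1) using 2
      ext j'
      simp [Pi.single_apply, apply_ite]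
    obtain ⟨n, hn⟩ := (AddCircle.coe_eq_zero_iff 1).mp ((hF i _).trans (congrFun hj i))
    exact ⟨n, by simpa using hn.symm⟩
  choose n hn using hint
  refine ⟨Matrix.of n, fun x ↦ funext fun i ↦ ?_⟩
  have hFx : F i x = ∑ j, n i j * x j := by
    conv_lhs => rw [← Finset.univ_sum_single x]
    refine (map_sum _ _ _).trans (Finset.sum_congr rfl fun j _ ↦ ?_)
    rw [← hn, mul_comm, ← smul_eq_mul, ← map_real_smul _ (hFc i), ← Pi.single_smul',
      smul_eq_mul, mul_one]
  have hFi := hF i x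
  simp only [AddMonoidHom.comp_apply, Pi.evalAddMonoidHom_apply] at hFi
  rw [intMulVec_apply, ← hFi, hFx, QuotientAddGroup.mk_sum]
  simp only [← zsmul_eq_mul, QuotientAddGroup.mk_zsmul, of_apply]

theorem Matrix.injective_intMulVec_of_forall_intMulVec_eq_zero {ι κ : Type*} [Fintype κ]
    {N : Matrix ι κ ℤ}
    (hN : ∀ x : κ → ℝ, (N.intMulVec fun j ↦ (x j : 𝕋)) = 0 → ∀ j, ∃ n : ℤ, x j = n) :
    Function.Injective (N.intMulVec : (κ → 𝕋) → (ι → 𝕋)) := by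
  refine (injective_iff_map_eq_zero _).mpr fun t ht ↦ ?_
  obtain ⟨x, rfl⟩ : ∃ x : κ → ℝ, (fun j ↦ (x j : 𝕋)) = t :=
    QuotientAddGroup.mk_surjective.comp_left t
  funext j
  obtain ⟨n, hn⟩ := hN x ht j
  exact (AddCircle.coe_eq_zero_iff 1).mpr ⟨n, by simp [hn]⟩

theorem Matrix.exists_eq_smul_of_injective_intMulVec {ι κ : Type*} [Fintype κ] {N : Matrix ι κ ℤ}
    (hN : Function.Injective (N.intMulVec : (κ → 𝕋) → (ι → 𝕋))) {c : ℤ} (hc : c ≠ 0)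
    {z : κ → ℤ} {y : ι → ℤ} (h : N *ᵥ z = c • y) : ∃ w, z = c • w := by
  -- the point `z / c` of the torus is killed by `N`
  let f : ℤ →+ 𝕋 := (QuotientAddGroup.mk' _).comp
    ((AddMonoidHom.mulLeft (c : ℝ)⁻¹).comp (Int.castAddHom ℝ))
  have hf (a : ℤ) : f a = (((a : ℝ) / c : ℝ) : 𝕋) := by simp [f, div_eq_inv_mul]
  have hzero : (fun j ↦ f (z j)) = 0 := hN <| by
    rw [map_intMulVec, intMulVec_int, h, map_zero]
    ext i
    simp [hf, hc]
  choose w hw using fun j ↦ (AddCircle.coe_eq_zero_iff 1).mp ((hf _).symm.trans (congrFun hzero j))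
  refine ⟨w, funext fun j ↦ ?_⟩
  have hwj := hw j
  rw [zsmul_one, eq_div_iff (by exact_mod_cast hc)] at hwj
  exact_mod_cast hwj.symm.trans (mul_comm _ _)

theorem Matrix.mulVec_injective_of_injective_intMulVec {ι κ : Type*} [Fintype κ]
    {N : Matrix ι κ ℤ} (hN : Function.Injective (N.intMulVec : (κ → 𝕋) → (ι → 𝕋))) :
    Function.Injective N.mulVec := by
  refine (injective_iff_map_eq_zero N.mulVecLin).mpr fun z hz ↦ funext fun j ↦ ?_
  by_contra hj
  -- `z` would be divisible by `2 * z j`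
  obtain ⟨w, hw⟩ := exists_eq_smul_of_injective_intMulVec hN (mul_ne_zero two_ne_zero hj)
    (y := 0) (by simpa using hz)
  have hzj := congrFun hw j
  simp only [Pi.smul_apply, smul_eq_mul] at hzj
  have hw2 : (1 : ℤ) = 2 * w j := by
    apply mul_left_cancel₀ (hj : z j ≠ 0)
    linear_combination hzj
  omega

theorem Matrix.isTorsionFree_of_injective_intMulVec {ι κ : Type*} [Fintype ι] [Fintype κ]
    {N : Matrix ι κ ℤ} (hN : Function.Injective (N.intMulVec : (κ → 𝕋) → (ι → 𝕋))) :
    Module.IsTorsionFree ℤ ((ι → ℤ) ⧸ LinearMap.range N.mulVecLin) := by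
  refine .of_smul_eq_zero fun c q hcq ↦ or_iff_not_imp_left.mpr fun hc ↦ ?_
  obtain ⟨y, rfl⟩ := Submodule.Quotient.mk_surjective _ q
  rw [← Submodule.Quotient.mk_smul, Submodule.Quotient.mk_eq_zero] at hcq
  obtain ⟨z, hz⟩ := hcq
  obtain ⟨w, rfl⟩ := exists_eq_smul_of_injective_intMulVec hN hc hz
  rw [Submodule.Quotient.mk_eq_zero]
  refine ⟨w, smul_right_injective _ hc ?_⟩
  exact (map_smul _ _ _).symm.trans hz

section

variable {K ι κ ρ : Type*} [AddCommGroup K] [Fintype ι] [Fintype κ] [Fintype ρ]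
  (φ : (κ → ℝ) × K →+ (ι → 𝕋)) {N : Matrix ι κ ℤ} {C₁ : Matrix κ ι ℤ} {C₂ : Matrix ρ ι ℤ}
  {D : Matrix ι ρ ℤ}

theorem injective_intMulVec_comp_inr [DecidableEq ι]
    (hN : ∀ x, φ (x, 0) = N.intMulVec fun j ↦ (x j : 𝕋))
    (hker : ∀ x m, φ (x, m) = 0 → m = 0) (h₃ : N * C₁ + D * C₂ = 1) :
    Function.Injective (C₂.intMulVec.comp (φ.comp (AddMonoidHom.inr _ K))) := by
  refine (injective_iff_map_eq_zero _).mpr fun m hm ↦ ?_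
  simp only [AddMonoidHom.comp_apply, AddMonoidHom.inr_apply] at hm
  obtain ⟨x, hx⟩ := QuotientAddGroup.mk_surjective.comp_left (C₁.intMulVec (φ (0, m)))
  -- `N * C₁ + D * C₂ = 1` puts `φ (0, m)` in the image of `φ (·, 0)`
  have hφ : φ (x, 0) = φ (0, m) := by
    conv_rhs => rw [← intMulVec_one (φ (0, m)), ← h₃, add_intMulVec, intMulVec_mul,
      intMulVec_mul, hm, map_zero, add_zero, ← hx]
    exact hN x
  have hφ' : φ (x, -m) = 0 := by
    rw [show (x, -m) = (x, 0) - (0, m) by simp, map_sub, hφ, sub_self]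
  exact neg_eq_zero.mp (hker x _ hφ')

theorem surjective_intMulVec_comp_inr [DecidableEq ρ]
    (hN : ∀ x, φ (x, 0) = N.intMulVec fun j ↦ (x j : 𝕋))
    (hsurj : Function.Surjective φ) (h₁ : C₂ * N = 0) (h₂ : C₂ * D = 1) :
    Function.Surjective (C₂.intMulVec.comp (φ.comp (AddMonoidHom.inr _ K))) := by
  intro y
  obtain ⟨⟨x, m⟩, hxm⟩ := hsurj (D.intMulVec y)
  refine ⟨m, ?_⟩
  rw [AddMonoidHom.comp_apply, AddMonoidHom.comp_apply, AddMonoidHom.inr_apply,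
    show ((0 : κ → ℝ), m) = (x, m) - (x, 0) by simp, map_sub, map_sub, hxm, hN,
    ← intMulVec_mul, ← intMulVec_mul, h₁, h₂, intMulVec_one, intMulVec_zero, sub_zero]

end

theorem stmt7_general {K : Type*} [AddCommGroup K] [TopologicalSpace K]
    [CompactSpace K]
    (k r : ℕ)
    (φ : ((Fin k → ℝ) × K) →+ (Fin (k + r) → AddCircle (1 : ℝ)))
    (hcont : Continuous φ)
    (hsurj : Function.Surjective φ)
    (hker : ∀ x : (Fin k → ℝ) × K,
      φ x = 0 ↔ ((∀ i, ∃ n : ℤ, x.1 i = (n : ℝ)) ∧ x.2 = 0)) :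
    ∃ e : K ≃ₜ (Fin r → AddCircle (1 : ℝ)), ∀ x y, e (x + y) = e x + e y := by
  obtain ⟨N, hN⟩ := exists_intMatrix_of_continuous (φ.comp (.inl _ _))
    (hcont.comp (continuous_id.prodMk continuous_const))
    fun z ↦ (hker _).mpr ⟨fun i ↦ ⟨z i, rfl⟩, rfl⟩
  simp only [AddMonoidHom.comp_apply, AddMonoidHom.inl_apply] at hN
  have hNinj := injective_intMulVec_of_forall_intMulVec_eq_zero fun x hx ↦
    ((hker (x, 0)).mp (by rwa [hN])).1
  have := isTorsionFree_of_injective_intMulVec hNinj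
  obtain ⟨C₁, C₂, D, h₁, h₂, h₃⟩ :=
    N.exists_complement (r := r) (by simp) (mulVec_injective_of_injective_intMulVec hNinj)
  let E := C₂.intMulVec.comp (φ.comp (AddMonoidHom.inr _ K))
  have hE : Function.Bijective E :=
    ⟨injective_intMulVec_comp_inr φ hN (fun x m h ↦ ((hker (x, m)).mp h).2) h₃,
      surjective_intMulVec_comp_inr φ hN hsurj h₁ h₂⟩
  have hEc : Continuous E :=
    (continuous_intMulVec C₂).comp (hcont.comp (continuous_const.prodMk continuous_id))
  exact ⟨hEc.homeoOfEquivCompactToT2 (f := Equiv.ofBijective E hE), map_add E⟩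

/-- If there is a continuous, open, surjective homomorphism
`φ : ℝ^k × K → 𝕋^(k+r)` with kernel exactly `ℤ^k × {0}`, where `K` is a compact Hausdorff
abelian topological group, then `K` is isomorphic as a topological group to `𝕋^r`. -/
theorem stmt7 {K : Type*} [AddCommGroup K] [TopologicalSpace K]
    [IsTopologicalAddGroup K] [CompactSpace K] [T2Space K]
    (k r : ℕ)
    (φ : ((Fin k → ℝ) × K) →+ (Fin (k + r) → AddCircle (1 : ℝ)))
    (hcont : Continuous φ) (hopen : IsOpenMap φ)
    (hsurj : Function.Surjective φ)
    (hker : ∀ x : (Fin k → ℝ) × K,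
      φ x = 0 ↔ ((∀ i, ∃ n : ℤ, x.1 i = (n : ℝ)) ∧ x.2 = 0)) :
    ∃ e : K ≃ₜ (Fin r → AddCircle (1 : ℝ)), ∀ x y, e (x + y) = e x + e y :=
  stmt7_general k r φ hcont hsurj hker
end

section
/- Let $K$ be a compact abelian topological group, $k \geq 0$, and let $V$ be an open subset of the product topological group $\mathbb{R}^k \times K$ containing the subgroup $\{0\} \times K$. Then there exists a natural number $m \geq 1$ such that the $m$-fold sumset $V + V + \dots + V$ ($m$ times) together with the lattice satisfies $(\underbrace{V + \dots + V}_{m}) + (\mathbb{Z}^k \times \{0\}) = \mathbb{R}^k \times K$. -/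
/-!
By the tube lemma, `V` contains `B(0, ε) × K` for some `ε > 0`. Write `z = (x, c)` as
`(fract x, c) + (⌊x⌋, 0)`; since `‖fract x‖ ≤ 1 < m ε`, the first term is the sum of `m` copies
of `(fract x / m, 0)`, one of which carries the `K`-coordinate `c` instead of `0`.
-/

open Metric Set

theorem exists_ball_prod_univ_subset {X K : Type*} [PseudoMetricSpace X] [TopologicalSpace K]
    [CompactSpace K] {V : Set (X × K)} (hV : IsOpen V) {x : X} (hx : ∀ c, (x, c) ∈ V) :
    ∃ ε > 0, ball x ε ×ˢ (univ : Set K) ⊆ V := by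
  obtain ⟨u, w, hu, -, hxu, hKw, huw⟩ :=
    generalized_tube_lemma isCompact_singleton isCompact_univ hV
      (by rintro ⟨y, c⟩ ⟨rfl, -⟩; exact hx c)
  obtain ⟨ε, hε, hball⟩ := isOpen_iff.mp hu x (hxu rfl)
  exact ⟨ε, hε, (prod_mono hball hKw).trans huw⟩

theorem norm_fract_le_one {ι : Type*} [Fintype ι] (x : ι → ℝ) :
    ‖fun i => Int.fract (x i)‖ ≤ 1 :=
  (pi_norm_le_iff_of_nonneg zero_le_one).mpr fun i => by
    rw [Real.norm_eq_abs, abs_of_nonneg (Int.fract_nonneg _)]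
    exact (Int.fract_lt_one _).le

theorem exists_sum_eq_of_ball_prod_univ_subset {E K : Type*} [NormedAddCommGroup E]
    [NormedSpace ℝ E] [AddCommMonoid K] {V : Set (E × K)} {ε : ℝ}
    (hV : ball 0 ε ×ˢ (univ : Set K) ⊆ V) {m : ℕ} (hm : 0 < m) {x : E} (hx : ‖x‖ < m * ε)
    (c : K) : ∃ f : Fin m → E × K, (∀ j, f j ∈ V) ∧ ∑ j, f j = (x, c) := by
  have hm' : (0 : ℝ) < m := Nat.cast_pos.mpr hm
  refine ⟨fun j => ((m : ℝ)⁻¹ • x, (Pi.single ⟨0, hm⟩ c : Fin m → K) j), fun j => hV ⟨?_, trivial⟩, ?_⟩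
  · rw [mem_ball_zero_iff, norm_smul, norm_inv, Real.norm_natCast, inv_mul_lt_iff₀ hm']
    exact hx
  · ext
    · simp only [Prod.fst_sum, Finset.sum_const, Finset.card_univ, Fintype.card_fin]
      rw [← Nat.cast_smul_eq_nsmul ℝ, smul_smul, mul_inv_cancel₀ hm'.ne', one_smul]
    · simp [Prod.snd_sum]

theorem stmt8_general {K : Type*} [AddCommGroup K] [TopologicalSpace K]
    [CompactSpace K]
    (k : ℕ) (V : Set ((Fin k → ℝ) × K)) (hV : IsOpen V)
    (hKV : ∀ x : K, ((0 : Fin k → ℝ), x) ∈ V) :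
    ∃ m : ℕ, 1 ≤ m ∧ ∀ z : (Fin k → ℝ) × K,
      ∃ (f : Fin m → (Fin k → ℝ) × K) (l : (Fin k → ℝ) × K),
        (∀ j, f j ∈ V) ∧ (∀ i, ∃ n : ℤ, l.1 i = (n : ℝ)) ∧ l.2 = 0 ∧
        z = (∑ j, f j) + l := by
  obtain ⟨ε, hε, hball⟩ := exists_ball_prod_univ_subset hV hKV
  obtain ⟨m, hm⟩ := exists_nat_gt ε⁻¹
  have hm_pos : 0 < m := by exact_mod_cast (inv_pos.mpr hε).trans hm
  refine ⟨m, hm_pos, fun z => ?_⟩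
  have hfract : ‖fun i => Int.fract (z.1 i)‖ < m * ε :=
    (norm_fract_le_one _).trans_lt ((inv_lt_iff_one_lt_mul₀ hε).mp hm)
  obtain ⟨f, hfV, hsum⟩ := exists_sum_eq_of_ball_prod_univ_subset hball hm_pos hfract z.2
  refine ⟨f, (fun i => ⌊z.1 i⌋, 0), hfV, fun i => ⟨_, rfl⟩, rfl, ?_⟩
  rw [hsum]
  ext i <;> simp

/-- If `V` is an open subset of `ℝ^k × K` (with `K` a compact abelian
topological group) containing `{0} × K`, then there is `m ≥ 1` such that the `m`-fold
sumset of `V` plus the lattice `ℤ^k × {0}` is all of `ℝ^k × K`. -/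
theorem stmt8 {K : Type*} [AddCommGroup K] [TopologicalSpace K]
    [IsTopologicalAddGroup K] [CompactSpace K]
    (k : ℕ) (V : Set ((Fin k → ℝ) × K)) (hV : IsOpen V)
    (hKV : ∀ x : K, ((0 : Fin k → ℝ), x) ∈ V) :
    ∃ m : ℕ, 1 ≤ m ∧ ∀ z : (Fin k → ℝ) × K,
      ∃ (f : Fin m → (Fin k → ℝ) × K) (l : (Fin k → ℝ) × K),
        (∀ j, f j ∈ V) ∧ (∀ i, ∃ n : ℤ, l.1 i = (n : ℝ)) ∧ l.2 = 0 ∧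
        z = (∑ j, f j) + l :=
  stmt8_general k V hV hKV
end
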